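/- arXiv:2106.00115 — 3 statements merged into one kernel-verified Lean document; each statement's English description precedes it below -/
import Mathlib

section
/- Let Y be a finite set with at least two elements, L : Y × Y → ℝ, and ρ > 0. Define L_ρ(x, y, h) = Φ*( max_{y' ≠ y} { L(y', y) - (1/ρ)·(h(x,y) - h(x,y')) } ) where Φ*(r) = min(M, max(0, r)) and M = max_{y,y'} L(y,y'). Then for any two scoring functions h, h̃ : X × Y → ℝ and any (x, y), |L_ρ(x, y, h) - L_ρ(x, y, h̃)| ≤ (2/ρ) · max_{y' ∈ Y} |h(x, y') - h̃(x, y')|, i.e., L_ρ is (2/ρ, ℓ∞)-Lipschitz in h. -/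
/-!
The clipping `r ↦ min M (max 0 r)` is 1-Lipschitz, and a maximum over finitely many indices is
1-Lipschitz for the sup-distance; each candidate `L(y', y) - (h(x,y) - h(x,y'))/ρ` moves by at most
`2/ρ` times the sup-distance of the scores, since it involves two of them.
-/

open scoped BigOperators

/-- The margin loss `L_ρ(x, y, h) = Φ*(max_{y' ≠ y}(L(y',y) - (h(x,y) - h(x,y'))/ρ))`
with `Φ*(r) = min(M, max(0, r))`. -/
noncomputable def marginLoss {X Y : Type*} [Fintype Y]
    (L : Y → Y → ℝ) (M ρ : ℝ) (x : X) (y : Y) (h : X × Y → ℝ) : ℝ :=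
  min M (max 0 (⨆ y' : {y' : Y // y' ≠ y},
    L y'.1 y - (h (x, y) - h (x, y'.1)) / ρ))

section Clip

variable {α : Type*} [AddCommGroup α] [LinearOrder α] [IsOrderedAddMonoid α]

theorem abs_min_max_sub_min_max_le (M a b : α) :
    |min M (max 0 a) - min M (max 0 b)| ≤ |a - b| := by
  refine (abs_min_sub_min_le_max _ _ _ _).trans (max_le ?_ ?_)
  · simp only [sub_self, abs_zero, abs_nonneg]
  · rw [max_comm 0 a, max_comm 0 b]
    exact abs_max_sub_max_le_abs a b 0

end Clip

namespace Real

variable {ι : Type*} [Finite ι] {f g : ι → ℝ} {ε : ℝ}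

theorem iSup_le_iSup_add (h : ∀ i, f i ≤ g i + ε) (hε : 0 ≤ ε) :
    ⨆ i, f i ≤ (⨆ i, g i) + ε := by
  cases isEmpty_or_nonempty ι
  · -- an empty supremum of reals is `0`, hence the hypothesis `0 ≤ ε`
    simpa only [iSup_of_isEmpty, zero_add] using hε
  · exact ciSup_le fun i ↦
      (h i).trans (add_le_add_left (le_ciSup (Finite.bddAbove_range g) i) ε)

theorem abs_iSup_sub_iSup_le (h : ∀ i, |f i - g i| ≤ ε) (hε : 0 ≤ ε) :
    |(⨆ i, f i) - ⨆ i, g i| ≤ ε := by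
  rw [abs_sub_le_iff, sub_le_iff_le_add', sub_le_iff_le_add']
  exact ⟨iSup_le_iSup_add (fun i ↦ sub_le_iff_le_add'.1 (abs_sub_le_iff.1 (h i)).1) hε,
    iSup_le_iSup_add (fun i ↦ sub_le_iff_le_add'.1 (abs_sub_le_iff.1 (h i)).2) hε⟩

end Real

theorem abs_sub_div_sub_sub_div_le {a b c b' c' ρ C : ℝ} (hρ : 0 < ρ)
    (hb : |b - b'| ≤ C) (hc : |c - c'| ≤ C) :
    |(a - (b - c) / ρ) - (a - (b' - c') / ρ)| ≤ 2 / ρ * C := by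
  have hsplit : (a - (b - c) / ρ) - (a - (b' - c') / ρ) = ((c - c') - (b - b')) / ρ := by ring
  rw [hsplit, abs_div, abs_of_pos hρ, div_mul_eq_mul_div, div_le_div_iff_of_pos_right hρ]
  linarith [abs_sub (c - c') (b - b')]

theorem marginLoss_ellinf_lipschitz_general {X Y : Type*} [Fintype Y]
    (L : Y → Y → ℝ) (ρ : ℝ) (hρ : 0 < ρ)
    (M : ℝ)
    (h h' : X × Y → ℝ) (x : X) (y : Y) :
    |marginLoss L M ρ x y h - marginLoss L M ρ x y h'| ≤
      (2 / ρ) * ⨆ y' : Y, |h (x, y') - h' (x, y')| := by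
  set C := ⨆ y' : Y, |h (x, y') - h' (x, y')|
  have hC : ∀ y', |h (x, y') - h' (x, y')| ≤ C := le_ciSup (Finite.bddAbove_range _)
  have hC₀ : 0 ≤ C := Real.iSup_nonneg fun _ ↦ abs_nonneg _
  refine (abs_min_max_sub_min_max_le M _ _).trans <|
    Real.abs_iSup_sub_iSup_le (fun y' ↦ ?_) (by positivity)
  exact abs_sub_div_sub_sub_div_le hρ (hC y) (hC y'.1)

theorem marginLoss_ellinf_lipschitz {X Y : Type*} [Fintype Y]
    (hY : 2 ≤ Fintype.card Y)
    (L : Y → Y → ℝ) (ρ : ℝ) (hρ : 0 < ρ)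
    (M : ℝ) (hM : M = ⨆ p : Y × Y, L p.1 p.2)
    (h h' : X × Y → ℝ) (x : X) (y : Y) :
    |marginLoss L M ρ x y h - marginLoss L M ρ x y h'| ≤
      (2 / ρ) * ⨆ y' : Y, |h (x, y') - h' (x, y')| :=
  marginLoss_ellinf_lipschitz_general L ρ hρ M h h' x y
end

section
/- With the margin loss L_ρ defined as above and nonnegative L with L(y, y) = 0 for all y, for any scoring function h and any (x, y), the margin loss dominates the prediction loss: L_ρ(x, y, h) ≥ L(ŷ(x), y), where ŷ(x) is any maximizer of y' ↦ h(x, y') over Y. -/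
open scoped BigOperators

theorem marginLoss_dominates_prediction_loss {X Y : Type*} [Fintype Y]
    (hY : 2 ≤ Fintype.card Y)
    (L : Y → Y → ℝ) (ρ : ℝ) (hρ : 0 < ρ)
    (M : ℝ) (hM : M = ⨆ p : Y × Y, L p.1 p.2)
    (hLnn : ∀ y y' : Y, 0 ≤ L y y')
    (hLdiag : ∀ y : Y, L y y = 0)
    (hLbd : ∀ y y' : Y, L y y' ≤ M)
    (h : X × Y → ℝ) (x : X) (y : Y)
    (yhat : Y) (hmax : ∀ y' : Y, h (x, y') ≤ h (x, yhat)) :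
    L yhat y ≤ marginLoss L M ρ x y h := by
  unfold marginLoss
  by_cases hne : yhat = y
  · subst hne
    rw [hLdiag]
    refine le_min ?_ (le_max_left _ _)
    exact (hLnn yhat yhat).trans (hLbd yhat yhat)
  · refine le_min (hLbd _ _) (le_trans ?_ (le_max_right _ _))
    have key : L yhat y ≤ L yhat y - (h (x, y) - h (x, yhat)) / ρ := by
      have : (h (x, y) - h (x, yhat)) / ρ ≤ 0 :=
        div_nonpos_of_nonpos_of_nonneg (by linarith [hmax y]) hρ.le
      linarith
    exact key.trans (le_ciSup (f := fun y' : {y' : Y // y' ≠ y} => L y'.1 y - (h (x, y) - h (x, y'.1)) / ρ) (Finite.bddAbove_range _) ⟨yhat, hne⟩)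
end

section
/- Stability of regularized minimizers: let λ > 0, and let f, g : ℝ^D → ℝ be given by f(w) = (1/m)∑_{i=1}^m ℓ_i(w) and g(w) = (1/m)∑_{i≠k} ℓ_i(w) + (1/m)ℓ'_k(w), where each ℓ_i and ℓ'_k is convex and G-Lipschitz, and let w_f, w_g minimize F_f(w) = f(w) + (λ/2)‖w‖₂² and F_g(w) = g(w) + (λ/2)‖w‖₂² respectively; then ‖w_f - w_g‖₂ ≤ 2G/(λ m). -/
open scoped BigOperators RealInnerProductSpace

lemma my_convexOn_sum {ι : Type*} {E : Type*} [NormedAddCommGroup E] [InnerProductSpace ℝ E]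
    (s : Finset ι) (f : ι → E → ℝ) (h : ∀ i ∈ s, ConvexOn ℝ Set.univ (f i)) :
    ConvexOn ℝ Set.univ (fun w => ∑ i ∈ s, f i w) := by
  classical
  induction s using Finset.cons_induction with
  | empty => simpa using convexOn_const (0:ℝ) convex_univ
  | cons i s hi ih =>
    simp only [Finset.sum_cons]
    exact (h i (Finset.mem_cons_self i s)).add
      (ih fun j hj => h j (Finset.mem_cons_of_mem hj))

lemma norm_combo_sq {E : Type*} [NormedAddCommGroup E] [InnerProductSpace ℝ E]
    (z w : E) (t : ℝ) :
    ‖(1 - t) • z + t • w‖ ^ 2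
      = (1 - t) * ‖z‖ ^ 2 + t * ‖w‖ ^ 2 - t * (1 - t) * ‖w - z‖ ^ 2 := by
  have h1 := norm_add_sq_real ((1 - t) • z) (t • w)
  have h2 := norm_sub_sq_real w z
  rw [norm_smul, norm_smul] at h1
  rw [real_inner_smul_left, real_inner_smul_right] at h1
  rw [real_inner_comm z w] at h2
  simp only [Real.norm_eq_abs, mul_pow, sq_abs] at h1
  rw [h1, h2]
  ring

lemma strong_min {E : Type*} [NormedAddCommGroup E] [InnerProductSpace ℝ E]
    (f : E → ℝ) (hf : ConvexOn ℝ Set.univ f) (lam : ℝ) (hlam : 0 < lam)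
    (z : E) (hmin : ∀ w, f z + lam / 2 * ‖z‖ ^ 2 ≤ f w + lam / 2 * ‖w‖ ^ 2) (w : E) :
    lam / 2 * ‖w - z‖ ^ 2 ≤ (f w + lam / 2 * ‖w‖ ^ 2) - (f z + lam / 2 * ‖z‖ ^ 2) := by
  set d2 := ‖w - z‖ ^ 2 with hd2
  set C := (f w + lam / 2 * ‖w‖ ^ 2) - (f z + lam / 2 * ‖z‖ ^ 2) with hC
  clear_value d2 C
  have key : ∀ t : ℝ, 0 < t → t ≤ 1 → lam / 2 * (1 - t) * d2 ≤ C := by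
    intro t ht ht1
    have hcv := hf.2 (Set.mem_univ z) (Set.mem_univ w) (by linarith : (0:ℝ) ≤ 1 - t)
      (le_of_lt ht) (by ring)
    simp only [smul_eq_mul] at hcv
    have hmin' := hmin ((1 - t) • z + t • w)
    have hn := norm_combo_sq z w t
    rw [← hd2] at hn
    have h2 : f z + lam / 2 * ‖z‖ ^ 2 ≤ (1 - t) * f z + t * f w +
        lam / 2 * ((1 - t) * ‖z‖ ^ 2 + t * ‖w‖ ^ 2 - t * (1 - t) * d2) := by
      rw [← hn]; linarith
    have h3 : t * (lam / 2 * (1 - t) * d2) ≤ t * C := by rw [hC]; nlinarith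
    exact le_of_mul_le_mul_left h3 ht
  have hd2nn : 0 ≤ d2 := by rw [hd2]; positivity
  have hCnn : 0 ≤ C := by have := hmin w; rw [hC]; linarith
  by_contra hcon
  push_neg at hcon
  have hpos : 0 < lam / 2 * d2 := lt_of_le_of_lt hCnn hcon
  have hd2pos : 0 < d2 := by nlinarith
  set t := (lam / 2 * d2 - C) / (2 * (lam / 2 * d2)) with htdef
  have ht : 0 < t := div_pos (by linarith) (by linarith)
  have ht1 : t ≤ 1 := by rw [div_le_one (by linarith)]; linarith
  have hk := key t ht ht1
  have htval : t * (lam / 2 * d2) = (lam / 2 * d2 - C) / 2 := by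
    rw [htdef]; field_simp
  nlinarith

theorem stability_of_regularized_minimizers {D : ℕ}
    (m : ℕ) (hm : 0 < m) (G lam : ℝ) (hG : 0 ≤ G) (hlam : 0 < lam)
    (ℓ : Fin m → EuclideanSpace ℝ (Fin D) → ℝ)
    (ℓ' : EuclideanSpace ℝ (Fin D) → ℝ) (k : Fin m)
    (hconv : ∀ i, ConvexOn ℝ Set.univ (ℓ i))
    (hconv' : ConvexOn ℝ Set.univ ℓ')
    (hlip : ∀ i w w', |ℓ i w - ℓ i w'| ≤ G * ‖w - w'‖)
    (hlip' : ∀ w w', |ℓ' w - ℓ' w'| ≤ G * ‖w - w'‖)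
    (wf wg : EuclideanSpace ℝ (Fin D))
    (hwf : ∀ w, (1 / (m : ℝ)) * ∑ i, ℓ i wf + (lam / 2) * ‖wf‖ ^ 2 ≤
      (1 / (m : ℝ)) * ∑ i, ℓ i w + (lam / 2) * ‖w‖ ^ 2)
    (hwg : ∀ w,
      (1 / (m : ℝ)) * ((∑ i ∈ Finset.univ.erase k, ℓ i wg) + ℓ' wg) + (lam / 2) * ‖wg‖ ^ 2 ≤
      (1 / (m : ℝ)) * ((∑ i ∈ Finset.univ.erase k, ℓ i w) + ℓ' w) + (lam / 2) * ‖w‖ ^ 2) :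
    ‖wf - wg‖ ≤ 2 * G / (lam * m) := by
  have hmR : (0 : ℝ) < m := by exact_mod_cast hm
  have hinv : (0 : ℝ) ≤ 1 / (m : ℝ) := by positivity
  set f₁ : EuclideanSpace ℝ (Fin D) → ℝ := fun w => (1 / (m : ℝ)) * ∑ i, ℓ i w with hf₁def
  set f₂ : EuclideanSpace ℝ (Fin D) → ℝ :=
    fun w => (1 / (m : ℝ)) * ((∑ i ∈ Finset.univ.erase k, ℓ i w) + ℓ' w) with hf₂def
  have hcf₁ : ConvexOn ℝ Set.univ f₁ := by
    have := (my_convexOn_sum Finset.univ ℓ (fun i _ => hconv i)).smul hinv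
    simpa [hf₁def, smul_eq_mul] using this
  have hcf₂ : ConvexOn ℝ Set.univ f₂ := by
    have := ((my_convexOn_sum (Finset.univ.erase k) ℓ (fun i _ => hconv i)).add hconv').smul hinv
    simpa [hf₂def, smul_eq_mul] using this
  have h1 := strong_min f₁ hcf₁ lam hlam wf (fun w => hwf w) wg
  have h2 := strong_min f₂ hcf₂ lam hlam wg (fun w => hwg w) wf
  rw [norm_sub_rev wg wf] at h1
  set d := ‖wf - wg‖ with hd
  have hdnn : 0 ≤ d := norm_nonneg _
  -- identify f₁ - f₂
  have hsum : ∀ w, (∑ i, ℓ i w) = (∑ i ∈ Finset.univ.erase k, ℓ i w) + ℓ k w :=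
    fun w => (Finset.sum_erase_add Finset.univ _ (Finset.mem_univ k)).symm
  have hdiff : ∀ w w', f₁ w - f₂ w + (f₂ w' - f₁ w') =
      (1 / (m : ℝ)) * ((ℓ k w - ℓ k w') + (ℓ' w' - ℓ' w)) := by
    intro w w'
    simp only [hf₁def, hf₂def, hsum]
    ring
  have hL1 : ℓ k wg - ℓ k wf ≤ G * d := by
    have := hlip k wg wf
    rw [norm_sub_rev wg wf, ← hd] at this
    exact (abs_le.mp this).2.trans (le_refl _) |>.trans (le_refl _)
  have hL2 : ℓ' wf - ℓ' wg ≤ G * d := by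
    have := hlip' wf wg
    rw [← hd] at this
    exact (abs_le.mp this).2
  have hmain : lam * d ^ 2 ≤ (2 * G / m) * d := by
    have hcomb : lam * d ^ 2 ≤ f₁ wg - f₂ wg + (f₂ wf - f₁ wf) := by linarith
    rw [hdiff wg wf] at hcomb
    calc lam * d ^ 2 ≤ (1 / (m : ℝ)) * ((ℓ k wg - ℓ k wf) + (ℓ' wf - ℓ' wg)) := hcomb
      _ ≤ (1 / (m : ℝ)) * (G * d + G * d) := by
          apply mul_le_mul_of_nonneg_left _ hinv; linarith
      _ = (2 * G / m) * d := by ring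
  rcases eq_or_lt_of_le hdnn with h | h
  · rw [← h]; positivity
  · rw [le_div_iff₀ (by positivity : (0:ℝ) < lam * m)]
    have : lam * d ≤ 2 * G / m := by
      have := (mul_le_mul_iff_of_pos_right h).mp (by nlinarith : (lam * d) * d ≤ (2 * G / m) * d)
      exact this
    calc d * (lam * m) = (lam * d) * m := by ring
      _ ≤ (2 * G / m) * m := by nlinarith
      _ = 2 * G := by field_simp
end
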